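/- Let m, L, d be positive integers with m ≥ d and let 0 ≤ w_s ≤ L. Then S(m,L,d,w_s) ≥ Σ_{j=w_s}^{L} C(m,L,d,j). Concretely, if for each j with w_s ≤ j ≤ L one takes an (m,L,d,j)-CSCC 𝒞_j, then the union ∪_{j=w_s}^{L} 𝒞_j is an (m,L,d,w_s)-SECC of size Σ_{j=w_s}^{L} |𝒞_j|. -/

import Mathlib

open Finset Filter

/-- Weight (number of ones) of a binary word. -/
def wt {n : ℕ} (x : Fin n → Bool) : ℕ := (Finset.univ.filter fun i => x i = true).card

/-- The index (in a word of length `m * L`) of position `j` of subblock `i`. -/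
def subIdx (m L : ℕ) (i : Fin m) (j : Fin L) : Fin (m * L) :=
  ⟨i.val * L + j.val, by
    have hj : j.val < L := j.isLt
    have hi : i.val + 1 ≤ m := i.isLt
    calc i.val * L + j.val < i.val * L + L := Nat.add_lt_add_left hj _
      _ = (i.val + 1) * L := by ring
      _ ≤ m * L := Nat.mul_le_mul hi (Nat.le_refl L)⟩

/-- The `i`-th subblock (of length `L`) of a binary word of length `m * L`. -/
def subblock (m L : ℕ) (x : Fin (m * L) → Bool) (i : Fin m) : Fin L → Bool :=
  fun j => x (subIdx m L i j)

/-- The CSCC space: binary words of length `m * L` each of whose `m` subblocks of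
length `L` has weight exactly `w`. -/
def CSCCspace (m L w : ℕ) : Set (Fin (m * L) → Bool) :=
  {x | ∀ i : Fin m, wt (subblock m L x i) = w}

/-- The SECC space: binary words of length `m * L` each of whose `m` subblocks of
length `L` has weight at least `w`. -/
def SECCspace (m L w : ℕ) : Set (Fin (m * L) → Bool) :=
  {x | ∀ i : Fin m, w ≤ wt (subblock m L x i)}

/-- A code with minimum distance `d` inside the space `Sp`. -/
def isCode {n : ℕ} (Sp : Set (Fin n → Bool)) (d : ℕ) (C : Finset (Fin n → Bool)) : Prop :=
  (↑C : Set (Fin n → Bool)) ⊆ Sp ∧ ∀ x ∈ C, ∀ y ∈ C, x ≠ y → d ≤ hammingDist x y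

/-- The ball of radius `t` around `x`, taken inside the space `Sp`. -/
def ball {n : ℕ} (Sp : Set (Fin n → Bool)) (x : Fin n → Bool) (t : ℕ) :
    Set (Fin n → Bool) :=
  {y | y ∈ Sp ∧ hammingDist x y ≤ t}

/-- `C(m,L,d,w)`: the maximum size of an `(m,L,d,w)`-CSCC. -/
noncomputable def maxCSCC (m L d w : ℕ) : ℕ :=
  sSup {k | ∃ C : Finset (Fin (m * L) → Bool), isCode (CSCCspace m L w) d C ∧ C.card = k}

/-- `S(m,L,d,w)`: the maximum size of an `(m,L,d,w)`-SECC. -/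
noncomputable def maxSECC (m L d w : ℕ) : ℕ :=
  sSup {k | ∃ C : Finset (Fin (m * L) → Bool), isCode (SECCspace m L w) d C ∧ C.card = k}

/-- `A(n,d,w)`: the maximum size of a constant weight code. -/
noncomputable def maxCWC (n d w : ℕ) : ℕ :=
  sSup {k | ∃ C : Finset (Fin n → Bool), isCode {x | wt x = w} d C ∧ C.card = k}

/-- `H(n,d,w)`: the maximum size of a heavy weight code. -/
noncomputable def maxHWC (n d w : ℕ) : ℕ :=
  sSup {k | ∃ C : Finset (Fin n → Bool), isCode {x | w ≤ wt x} d C ∧ C.card = k}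

/-- `A(n,d)`: the maximum size of a binary code of length `n` and distance `d`. -/
noncomputable def maxBinary (n d : ℕ) : ℕ :=
  sSup {k | ∃ C : Finset (Fin n → Bool),
    (∀ x ∈ C, ∀ y ∈ C, x ≠ y → d ≤ hammingDist x y) ∧ C.card = k}

/-- `A_q(n,d)`: the maximum size of a `q`-ary code of length `n` and distance `d`. -/
noncomputable def maxQary (q n d : ℕ) : ℕ :=
  sSup {k | ∃ C : Finset (Fin n → Fin q),
    (∀ x ∈ C, ∀ y ∈ C, x ≠ y → d ≤ hammingDist x y) ∧ C.card = k}

/-- The size of a radius-`r` CSCC ball: the sum over all tuples `(u_1, …, u_m)` with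
`0 ≤ u_i ≤ min{w, L-w}` and `2(u_1 + ⋯ + u_m) ≤ r` of `∏ i, C(w,u_i)·C(L-w,u_i)`. -/
def csccBallSize (m L w r : ℕ) : ℕ :=
  ∑ u ∈ (Finset.univ : Finset (Fin m → Fin (min w (L - w) + 1))).filter
      (fun u => 2 * (∑ i, (u i : ℕ)) ≤ r),
    ∏ i, (w.choose (u i : ℕ)) * ((L - w).choose (u i : ℕ))

/-- The binary entropy function (base-2 logarithms, `h 0 = h 1 = 0`). -/
noncomputable def binent (p : ℝ) : ℝ :=
  -(p * Real.logb 2 p) - (1 - p) * Real.logb 2 (1 - p)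

/-- The asymptotic CSCC rate `γ(L,δ,w/L)`. -/
noncomputable def gammaRate (L : ℕ) (δ : ℝ) (w : ℕ) : ℝ :=
  Filter.limsup (fun m : ℕ =>
    Real.logb 2 (maxCSCC m L ⌊(m : ℝ) * L * δ⌋₊ w) / ((m : ℝ) * L)) Filter.atTop

/-- The asymptotic SECC rate `σ(L,δ,w/L)`. -/
noncomputable def sigmaRate (L : ℕ) (δ : ℝ) (w : ℕ) : ℝ :=
  Filter.limsup (fun m : ℕ =>
    Real.logb 2 (maxSECC m L ⌊(m : ℝ) * L * δ⌋₊ w) / ((m : ℝ) * L)) Filter.atTop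

/-! Two words from CSCC spaces of different weights `j ≠ j'` differ in every one of the `m`
subblocks, hence are at distance at least `m ≥ d`; within one weight the CSCC distance bound
applies. So the union of the codes is again a code with distance `d`, and it lies in the SECC
space since a subblock of weight `j ≥ w` has weight at least `w`. Codes of different weights
are disjoint (for `m > 0`), so the sizes add up. -/

lemma subIdx_eq_finProdFinEquiv (m L : ℕ) (i : Fin m) (j : Fin L) :
    subIdx m L i j = finProdFinEquiv (i, j) := by
  ext
  simp only [subIdx, finProdFinEquiv_apply_val]
  ring

lemma hammingDist_eq_sum_subblock (m L : ℕ) (x y : Fin (m * L) → Bool) :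
    hammingDist x y = ∑ i, hammingDist (subblock m L x i) (subblock m L y i) := by
  simp only [hammingDist, card_filter, subblock, subIdx_eq_finProdFinEquiv]
  rw [← Fintype.sum_equiv finProdFinEquiv _ _ fun _ => rfl, Fintype.sum_prod_type]

lemma le_hammingDist_of_subblock_ne {m L : ℕ} {x y : Fin (m * L) → Bool}
    (h : ∀ i, subblock m L x i ≠ subblock m L y i) : m ≤ hammingDist x y := by
  rw [hammingDist_eq_sum_subblock]
  calc m = ∑ _i : Fin m, 1 := by simp
    _ ≤ _ := sum_le_sum fun i _ => hammingDist_pos.mpr (h i)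

section CSCC

variable {m L j j' : ℕ} {x y : Fin (m * L) → Bool}

lemma le_hammingDist_of_mem_CSCCspace (hx : x ∈ CSCCspace m L j) (hy : y ∈ CSCCspace m L j')
    (hjj' : j ≠ j') : m ≤ hammingDist x y :=
  le_hammingDist_of_subblock_ne fun i hxy => hjj' <| by rw [← hx i, ← hy i, hxy]

lemma disjoint_CSCCspace (hm : 0 < m) (hjj' : j ≠ j') :
    Disjoint (CSCCspace m L j) (CSCCspace m L j') :=
  Set.disjoint_left.mpr fun _ hx hx' => hjj' <| (hx ⟨0, hm⟩).symm.trans (hx' ⟨0, hm⟩)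

lemma CSCCspace_subset_SECCspace {w : ℕ} (hwj : w ≤ j) :
    CSCCspace m L j ⊆ SECCspace m L w :=
  fun _ hx i => (hx i).symm ▸ hwj

end CSCC

lemma isCode_biUnion {ι : Type*} [DecidableEq ι] {n d : ℕ} {Sp : Set (Fin n → Bool)}
    {Sp' : ι → Set (Fin n → Bool)} {s : Finset ι} {C : ι → Finset (Fin n → Bool)}
    (hC : ∀ j ∈ s, isCode (Sp' j) d (C j)) (hSp : ∀ j ∈ s, Sp' j ⊆ Sp)
    (hfar : ∀ j ∈ s, ∀ j' ∈ s, j ≠ j' → ∀ x ∈ Sp' j, ∀ y ∈ Sp' j', d ≤ hammingDist x y) :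
    isCode Sp d (s.biUnion C) := by
  refine ⟨?_, ?_⟩
  · intro x hx
    obtain ⟨j, hj, hxj⟩ := mem_biUnion.mp hx
    exact hSp j hj ((hC j hj).1 hxj)
  · intro x hx y hy hxy
    obtain ⟨j, hj, hxj⟩ := mem_biUnion.mp hx
    obtain ⟨j', hj', hyj'⟩ := mem_biUnion.mp hy
    by_cases hjj' : j = j'
    · subst hjj'
      exact (hC j hj).2 x hxj y hyj' hxy
    · exact hfar j hj j' hj' hjj' x ((hC j hj).1 hxj) y ((hC j' hj').1 hyj')

lemma bddAbove_card_setOf {n : ℕ} (P : Finset (Fin n → Bool) → Prop) :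
    BddAbove {k | ∃ C : Finset (Fin n → Bool), P C ∧ C.card = k} :=
  ⟨Fintype.card (Fin n → Bool), by rintro k ⟨C, -, rfl⟩; exact card_le_univ C⟩

lemma exists_card_eq_sSup {n : ℕ} {P : Finset (Fin n → Bool) → Prop} (h : P ∅) :
    ∃ C, P C ∧ C.card = sSup {k | ∃ C : Finset (Fin n → Bool), P C ∧ C.card = k} :=
  Nat.sSup_mem (s := {k | ∃ C, P C ∧ C.card = k}) ⟨0, ∅, h, rfl⟩ (bddAbove_card_setOf P)

lemma exists_isCode_card_eq_maxCSCC (m L d w : ℕ) :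
    ∃ C : Finset (Fin (m * L) → Bool), isCode (CSCCspace m L w) d C ∧ C.card = maxCSCC m L d w :=
  exists_card_eq_sSup ⟨by simp, by simp⟩

lemma card_le_maxSECC {m L d w : ℕ} {C : Finset (Fin (m * L) → Bool)}
    (hC : isCode (SECCspace m L w) d C) : C.card ≤ maxSECC m L d w :=
  le_csSup (bddAbove_card_setOf _) ⟨C, hC, rfl⟩

lemma isCode_SECCspace_biUnion {m L d w : ℕ} (hdm : d ≤ m) {s : Finset ℕ} (hs : ∀ j ∈ s, w ≤ j)
    {C : ℕ → Finset (Fin (m * L) → Bool)} (hC : ∀ j ∈ s, isCode (CSCCspace m L j) d (C j)) :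
    isCode (SECCspace m L w) d (s.biUnion C) :=
  isCode_biUnion hC (fun j hj => CSCCspace_subset_SECCspace (hs j hj))
    fun _ _ _ _ hjj' _ hx _ hy => hdm.trans (le_hammingDist_of_mem_CSCCspace hx hy hjj')

lemma card_biUnion_of_subset_CSCCspace {m L : ℕ} (hm : 0 < m) {s : Finset ℕ}
    {C : ℕ → Finset (Fin (m * L) → Bool)} (hC : ∀ j ∈ s, ↑(C j) ⊆ CSCCspace m L j) :
    (s.biUnion C).card = ∑ j ∈ s, (C j).card :=
  card_biUnion fun j hj j' hj' hjj' =>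
    disjoint_coe.mp <| (disjoint_CSCCspace hm hjj').mono (hC j hj) (hC j' hj')

theorem stmt_3_general (m L d w : ℕ) (hm : 0 < m) (hdm : d ≤ m) :
    (∀ C : ℕ → Finset (Fin (m * L) → Bool),
      (∀ j ∈ Finset.Icc w L, isCode (CSCCspace m L j) d (C j)) →
        isCode (SECCspace m L w) d ((Finset.Icc w L).biUnion C) ∧
        ((Finset.Icc w L).biUnion C).card = ∑ j ∈ Finset.Icc w L, (C j).card) ∧
    (∑ j ∈ Finset.Icc w L, maxCSCC m L d j) ≤ maxSECC m L d w := by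
  have union : ∀ C : ℕ → Finset (Fin (m * L) → Bool),
      (∀ j ∈ Icc w L, isCode (CSCCspace m L j) d (C j)) →
        isCode (SECCspace m L w) d ((Icc w L).biUnion C) ∧
        ((Icc w L).biUnion C).card = ∑ j ∈ Icc w L, (C j).card := fun C hC =>
    ⟨isCode_SECCspace_biUnion hdm (fun j hj => (mem_Icc.mp hj).1) hC,
      card_biUnion_of_subset_CSCCspace hm fun j hj => (hC j hj).1⟩
  refine ⟨union, ?_⟩
  choose C hC hcard using exists_isCode_card_eq_maxCSCC m L d
  obtain ⟨hcode, hunion⟩ := union C fun j _ => hC j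
  calc ∑ j ∈ Icc w L, maxCSCC m L d j = ((Icc w L).biUnion C).card := by simp only [hunion, hcard]
    _ ≤ maxSECC m L d w := card_le_maxSECC hcode

/-- For `m ≥ d`, the union of `(m,L,d,j)`-CSCCs for `w ≤ j ≤ L` is an
`(m,L,d,w)`-SECC of size the sum of the sizes; hence
`S(m,L,d,w) ≥ Σ_{j=w}^{L} C(m,L,d,j)`. -/
theorem stmt_3 (m L d w : ℕ) (hm : 0 < m) (hL : 0 < L) (hd : 0 < d) (hdm : d ≤ m)
    (hw : w ≤ L) :
    (∀ C : ℕ → Finset (Fin (m * L) → Bool),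
      (∀ j ∈ Finset.Icc w L, isCode (CSCCspace m L j) d (C j)) →
        isCode (SECCspace m L w) d ((Finset.Icc w L).biUnion C) ∧
        ((Finset.Icc w L).biUnion C).card = ∑ j ∈ Finset.Icc w L, (C j).card) ∧
    (∑ j ∈ Finset.Icc w L, maxCSCC m L d j) ≤ maxSECC m L d w :=
  stmt_3_general m L d w hm hdm
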